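/- arXiv:1910.00555 — 4 statements merged into one kernel-verified Lean document; each statement's English description precedes it below -/
import Mathlib

section
/- (Derivative identity for the composite adaptive barrier, Table I.) Let h_a : ℝⁿ × ℝᵖ → ℝ be continuously differentiable, f : ℝⁿ → ℝⁿ, F : ℝⁿ → ℝ^{n×p}, g : ℝⁿ → ℝ^{n×m} be continuous, Γ ∈ ℝ^{p×p} be symmetric positive definite, and θ⋆ ∈ ℝᵖ. Let x : ℝ → ℝⁿ, θ̂ : ℝ → ℝᵖ, and u : ℝ → ℝᵐ satisfy, for all t, ẋ(t) = f(x(t)) + F(x(t)) θ⋆ + g(x(t)) u(t) and θ̂̇(t) = Γ τ(t), where τ(t) = −( (∂h_a/∂x)(x(t),θ̂(t)) · F(x(t)) )ᵀ ∈ ℝᵖ. Define θ̃(t) = θ⋆ − θ̂(t) and h(t) = h_a(x(t), θ̂(t)) − (1/2) θ̃(t)ᵀ Γ⁻¹ θ̃(t). Then for all t, h is differentiable at t with ḣ(t) = (∂h_a/∂x)(x(t),θ̂(t)) · ( f(x(t)) + F(x(t)) · ( θ̂(t) − Γ ((∂h_a/∂θ)(x(t),θ̂(t)))ᵀ ) +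 g(x(t)) u(t) ). -/
/-!
Along the trajectory the chain rule gives `ḣ = ∂ₓh_a ẋ + ∂_θh_a θ̂̇ + θ̃ᵀ Γ⁻¹ θ̂̇`, the last term
using the symmetry of `Γ⁻¹`. With `θ̂̇ = Γ τ` it equals `θ̃ᵀ τ`, and the update law
`τ = −(∂ₓh_a F)ᵀ` turns both `θ̃ᵀ τ` and `∂_θh_a Γ τ` into `∂ₓh_a` applied to `−F θ̃` and
`−F Γ ∇_θh_a`. Collecting everything inside `∂ₓh_a` replaces `θ⋆` by `θ̂ − Γ ∇_θh_a`.
-/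

open Matrix

section LinearForm

variable {ι R Fₗ : Type*} [CommSemiring R] [FunLike Fₗ (ι → R) R]
  [LinearMapClass Fₗ R (ι → R) R]

theorem map_mulVec_eq_dotProduct {κ : Type*} [Fintype κ] (L : Fₗ) (A : Matrix ι κ R) (z : κ → R) :
    L (A *ᵥ z) = z ⬝ᵥ fun k => L (Aᵀ k) := by
  have hcols : A *ᵥ z = ∑ k, z k • Aᵀ k := by
    ext i
    simp [mulVec, dotProduct, mul_comm]
  simp [hcols, map_sum, map_smul, dotProduct]

theorem map_eq_dotProduct_single [Fintype ι] [DecidableEq ι] (L : Fₗ) (z : ι → R) :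
    L z = z ⬝ᵥ fun i => L (Pi.single i 1) := by
  have hone : ∀ i, (1 : Matrix ι ι R) i = Pi.single i 1 := fun i => funext fun j => one_eq_pi_single
  simpa [hone] using map_mulVec_eq_dotProduct L (1 : Matrix ι ι R) z

end LinearForm

section Derivatives

variable {𝕜 ι : Type*} [NontriviallyNormedField 𝕜] [Fintype ι] {t : 𝕜}

theorem HasDerivAt.dotProduct {v w : 𝕜 → ι → 𝕜} {v' w' : ι → 𝕜} (hv : HasDerivAt v v' t)
    (hw : HasDerivAt w w' t) :
    HasDerivAt (fun s => v s ⬝ᵥ w s) (v' ⬝ᵥ w t + v t ⬝ᵥ w') t := by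
  simpa [_root_.dotProduct, Finset.sum_add_distrib] using
    HasDerivAt.fun_sum fun i _ => (hasDerivAt_pi.1 hv i).mul (hasDerivAt_pi.1 hw i)

theorem HasDerivAt.mulVec {κ : Type*} (A : Matrix κ ι 𝕜) {v : 𝕜 → ι → 𝕜} {v' : ι → 𝕜}
    (hv : HasDerivAt v v' t) : HasDerivAt (fun s => A *ᵥ v s) (A *ᵥ v') t :=
  hasDerivAt_pi.2 fun i =>
    (hasDerivAt_const t (A i)).dotProduct hv |>.congr_deriv (by rw [zero_dotProduct, zero_add]; rfl)

theorem HasDerivAt.dotProduct_mulVec_self {A : Matrix ι ι 𝕜} (hA : A.IsSymm) {v : 𝕜 → ι → 𝕜}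
    {v' : ι → 𝕜} (hv : HasDerivAt v v' t) :
    HasDerivAt (fun s => v s ⬝ᵥ A *ᵥ v s) (2 * (v t ⬝ᵥ A *ᵥ v')) t := by
  refine (hv.dotProduct (hv.mulVec A)).congr_deriv ?_
  rw [dotProduct_comm, dotProduct_mulVec, ← mulVec_transpose, hA.eq]
  ring

end Derivatives

theorem DifferentiableAt.hasDerivAt_comp_prodMk {𝕜 E F G : Type*} [NontriviallyNormedField 𝕜]
    [NormedAddCommGroup E] [NormedSpace 𝕜 E] [NormedAddCommGroup F] [NormedSpace 𝕜 F]
    [NormedAddCommGroup G] [NormedSpace 𝕜 G] {h : E × F → G} {x : 𝕜 → E} {y : 𝕜 → F}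
    {x' : E} {y' : F} {t : 𝕜} (hh : DifferentiableAt 𝕜 h (x t, y t)) (hx : HasDerivAt x x' t)
    (hy : HasDerivAt y y' t) :
    HasDerivAt (fun s => h (x s, y s))
      (fderiv 𝕜 (fun a => h (a, y t)) (x t) x' + fderiv 𝕜 (fun b => h (x t, b)) (y t) y') t := by
  have hfst : fderiv 𝕜 (fun a => h (a, y t)) (x t) = (fderiv 𝕜 h (x t, y t)).comp (.inl 𝕜 E F) :=
    (hh.hasFDerivAt.comp (x t) (hasFDerivAt_prodMk_left (x t) (y t))).fderiv
  have hsnd : fderiv 𝕜 (fun b => h (x t, b)) (y t) = (fderiv 𝕜 h (x t, y t)).comp (.inr 𝕜 E F) :=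
    (hh.hasFDerivAt.comp (y t) (hasFDerivAt_prodMk_right (x t) (y t))).fderiv
  rw [hfst, hsnd, ContinuousLinearMap.comp_apply, ContinuousLinearMap.comp_apply, ← map_add]
  simpa [Function.comp_def] using hh.hasFDerivAt.comp_hasDerivAt t (hx.prodMk hy)

theorem composite_barrier_derivative_identity_general
    {n p m : ℕ}
    (ha : ((Fin n → ℝ) × (Fin p → ℝ)) → ℝ) (hha : ContDiff ℝ 1 ha)
    (f : (Fin n → ℝ) → (Fin n → ℝ))
    (F : (Fin n → ℝ) → Matrix (Fin n) (Fin p) ℝ)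
    (g : (Fin n → ℝ) → Matrix (Fin n) (Fin m) ℝ)
    (Γ : Matrix (Fin p) (Fin p) ℝ) (hΓ : Γ.PosDef)
    (θs : Fin p → ℝ)
    (x : ℝ → (Fin n → ℝ)) (θh : ℝ → (Fin p → ℝ)) (u : ℝ → (Fin m → ℝ))
    -- the adaptation law τ(t) = −((∂h_a/∂x)(x(t),θ̂(t)) · F(x(t)))ᵀ
    (τ : ℝ → (Fin p → ℝ))
    (hτ : ∀ t, τ t = fun i =>
      -(fderiv ℝ (fun y => ha (y, θh t)) (x t)) (fun j => F (x t) j i))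
    -- closed-loop dynamics ẋ = f(x) + F(x) θ⋆ + g(x) u
    (hx : ∀ t, HasDerivAt x
      (f (x t) + (F (x t)).mulVec θs + (g (x t)).mulVec (u t)) t)
    -- parameter update θ̂̇ = Γ τ
    (hθh : ∀ t, HasDerivAt θh (Γ.mulVec (τ t)) t) :
    ∀ t, HasDerivAt
      (fun s => ha (x s, θh s)
        - (1 / 2) * ((θs - θh s) ⬝ᵥ Γ⁻¹.mulVec (θs - θh s)))
      ((fderiv ℝ (fun y => ha (y, θh t)) (x t))
        (f (x t)
          + (F (x t)).mulVec
              (θh t - Γ.mulVec (fun i =>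
                (fderiv ℝ (fun θ => ha (x t, θ)) (θh t)) (Pi.single i 1)))
          + (g (x t)).mulVec (u t))) t := by
  intro t
  have hΓsymm : Γ.IsSymm := by
    simpa [IsSymm, conjTranspose_eq_transpose_of_trivial] using hΓ.isHermitian.eq
  have hbarrier := (((hha.differentiable one_ne_zero) _).hasDerivAt_comp_prodMk (hx t) (hθh t)).sub
    ((((hθh t).const_sub θs).dotProduct_mulVec_self hΓsymm.inv).const_mul (1 / 2))
  set Lx := fderiv ℝ (fun y => ha (y, θh t)) (x t)
  set Lθ := fderiv ℝ (fun θ => ha (x t, θ)) (θh t)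
  have hΓinv_mul : Γ⁻¹ * Γ = 1 := nonsing_inv_mul Γ ((isUnit_iff_isUnit_det Γ).1 hΓ.isUnit)
  have hτ_dot : ∀ z, z ⬝ᵥ τ t = -Lx (F (x t) *ᵥ z) := by
    intro z
    rw [map_mulVec_eq_dotProduct, hτ t, ← dotProduct_neg]
    rfl
  have hLθ : Lθ (Γ *ᵥ τ t) = -Lx (F (x t) *ᵥ (Γ *ᵥ fun i => Lθ (Pi.single i 1))) := by
    rw [map_eq_dotProduct_single Lθ, dotProduct_comm, dotProduct_mulVec, ← mulVec_transpose,
      hΓsymm.eq, hτ_dot]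
  have hquad : (θs - θh t) ⬝ᵥ Γ⁻¹ *ᵥ -(Γ *ᵥ τ t) = Lx (F (x t) *ᵥ (θs - θh t)) := by
    rw [mulVec_neg, mulVec_mulVec, hΓinv_mul, one_mulVec, dotProduct_neg, hτ_dot, neg_neg]
  refine hbarrier.congr_deriv ?_
  rw [hLθ, hquad]
  simp only [mulVec_sub, map_add, map_sub]
  ring

/-- Table I derivative identity for the composite adaptive barrier
`h(t) = h_a(x(t),θ̂(t)) − (1/2) θ̃(t)ᵀ Γ⁻¹ θ̃(t)` along the closed-loop adaptive
system with update law `τ = −((∂h_a/∂x) F(x))ᵀ`. -/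
theorem composite_barrier_derivative_identity
    {n p m : ℕ}
    (ha : ((Fin n → ℝ) × (Fin p → ℝ)) → ℝ) (hha : ContDiff ℝ 1 ha)
    (f : (Fin n → ℝ) → (Fin n → ℝ)) (hf : Continuous f)
    (F : (Fin n → ℝ) → Matrix (Fin n) (Fin p) ℝ) (hF : Continuous F)
    (g : (Fin n → ℝ) → Matrix (Fin n) (Fin m) ℝ) (hg : Continuous g)
    (Γ : Matrix (Fin p) (Fin p) ℝ) (hΓ : Γ.PosDef)
    (θs : Fin p → ℝ)
    (x : ℝ → (Fin n → ℝ)) (θh : ℝ → (Fin p → ℝ)) (u : ℝ → (Fin m → ℝ))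
    -- the adaptation law τ(t) = −((∂h_a/∂x)(x(t),θ̂(t)) · F(x(t)))ᵀ
    (τ : ℝ → (Fin p → ℝ))
    (hτ : ∀ t, τ t = fun i =>
      -(fderiv ℝ (fun y => ha (y, θh t)) (x t)) (fun j => F (x t) j i))
    -- closed-loop dynamics ẋ = f(x) + F(x) θ⋆ + g(x) u
    (hx : ∀ t, HasDerivAt x
      (f (x t) + (F (x t)).mulVec θs + (g (x t)).mulVec (u t)) t)
    -- parameter update θ̂̇ = Γ τ
    (hθh : ∀ t, HasDerivAt θh (Γ.mulVec (τ t)) t) :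
    ∀ t, HasDerivAt
      (fun s => ha (x s, θh s)
        - (1 / 2) * ((θs - θh s) ⬝ᵥ Γ⁻¹.mulVec (θs - θh s)))
      ((fderiv ℝ (fun y => ha (y, θh t)) (x t))
        (f (x t)
          + (F (x t)).mulVec
              (θh t - Γ.mulVec (fun i =>
                (fderiv ℝ (fun θ => ha (x t, θ)) (θh t)) (Pi.single i 1)))
          + (g (x t)).mulVec (u t))) t :=
  composite_barrier_derivative_identity_general ha hha f F g Γ hΓ θs x θh u τ hτ hx hθh
end

section
/- (Control Barrier Function safety, trajectory/comparison form.) Let h : ℝⁿ → ℝ be continuously differentiable and let α : ℝ → ℝ be locally Lipschitz, strictly monotonically increasing, with α(0) = 0. Let x : [0,T) → ℝⁿ be differentiable and suppose that for all t ∈ [0,T), the derivative of t ↦ h(x(t)) satisfies (d/dt) h(x(t)) ≥ −α(h(x(t))). If h(x(0)) ≥ 0, then h(x(t)) ≥ 0 for all t ∈ [0,T); i.e., the 0-superlevel set S = {x ∈ ℝⁿ : h(x) ≥ 0} is forward invariant along the trajectory. -/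
/-! Along the trajectory, `φ = h ∘ x` has derivative `≥ -α (φ s)`, and `-α` is positive on the
negative reals because `α` is strictly increasing with `α 0 = 0`. Hence wherever `φ` touches a
level `-ε < 0` its derivative is positive, so it can never cross that level downwards (a fencing
argument); letting `ε → 0` gives `φ ≥ 0`. -/

open Set

theorem nonneg_of_deriv_right_pos_of_neg {φ φ' : ℝ → ℝ} {a b : ℝ}
    (hφ : ContinuousOn φ (Icc a b)) (hφ' : ∀ s ∈ Ico a b, HasDerivWithinAt φ (φ' s) (Ici s) s)
    (hpos : ∀ s ∈ Ico a b, φ s < 0 → 0 < φ' s) (ha : 0 ≤ φ a) :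
    ∀ s ∈ Icc a b, 0 ≤ φ s := by
  intro s hs
  have below_barrier : ∀ ε > (0 : ℝ), -φ s ≤ ε := fun ε hε =>
    image_le_of_deriv_right_lt_deriv_boundary (f := fun r => -φ r) (B := fun _ => ε)
      (B' := fun _ => 0) hφ.neg (fun r hr => (hφ' r hr).neg) (by linarith)
      (fun _ => hasDerivAt_const _ ε)
      (fun r hr hr_eq => neg_neg_of_pos (hpos r hr (by linarith))) hs
  linarith [le_of_forall_pos_le_add (a := -φ s) (b := 0) (by simpa using below_barrier)]

theorem cbf_forward_invariance_general
    {n : ℕ} (T : ℝ)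
    (h : (Fin n → ℝ) → ℝ) (hh : ContDiff ℝ 1 h)
    (α : ℝ → ℝ) (hαmono : StrictMono α)
    (hα0 : α 0 = 0)
    (x : ℝ → (Fin n → ℝ)) (x' : ℝ → (Fin n → ℝ))
    (hx : ∀ t ∈ Set.Ico (0 : ℝ) T, HasDerivAt x (x' t) t)
    (hineq : ∀ t ∈ Set.Ico (0 : ℝ) T,
      (fderiv ℝ h (x t)) (x' t) ≥ -α (h (x t)))
    (hinit : 0 ≤ h (x 0)) :
    ∀ t ∈ Set.Ico (0 : ℝ) T, 0 ≤ h (x t) := by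
  have hφ : ∀ s ∈ Ico (0 : ℝ) T, HasDerivAt (fun s => h (x s)) (fderiv ℝ h (x s) (x' s)) s :=
    fun s hs => ((hh.differentiable one_ne_zero (x s)).hasFDerivAt).comp_hasDerivAt s (hx s hs)
  intro t ht
  have hsub : Icc 0 t ⊆ Ico 0 T := Icc_subset_Ico_right ht.2
  refine nonneg_of_deriv_right_pos_of_neg
    (fun s hs => (hφ s (hsub hs)).continuousAt.continuousWithinAt) (fun s hs => (hφ s (hsub (Ico_subset_Icc_self hs))).hasDerivWithinAt) (fun s hs hneg => ?_)
    hinit t (right_mem_Icc.2 ht.1)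
  have hα_neg : α (h (x s)) < 0 := hα0 ▸ hαmono hneg
  linarith [hineq s (hsub (Ico_subset_Icc_self hs))]

/-- CBF safety in trajectory/comparison form: if `h` is `C¹`, `α` is locally
Lipschitz, strictly increasing with `α 0 = 0`, the trajectory `x` is
differentiable on `[0,T)` with derivative `x'`, the derivative of `t ↦ h(x(t))`
satisfies `(d/dt) h(x(t)) ≥ −α(h(x(t)))` there, and `h(x(0)) ≥ 0`, then
`h(x(t)) ≥ 0` for all `t ∈ [0,T)`: the 0-superlevel set of `h` is forward
invariant along the trajectory. -/
theorem cbf_forward_invariance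
    {n : ℕ} (T : ℝ) (hT : 0 < T)
    (h : (Fin n → ℝ) → ℝ) (hh : ContDiff ℝ 1 h)
    (α : ℝ → ℝ) (hαlip : LocallyLipschitz α) (hαmono : StrictMono α)
    (hα0 : α 0 = 0)
    (x : ℝ → (Fin n → ℝ)) (x' : ℝ → (Fin n → ℝ))
    (hx : ∀ t ∈ Set.Ico (0 : ℝ) T, HasDerivAt x (x' t) t)
    (hineq : ∀ t ∈ Set.Ico (0 : ℝ) T,
      (fderiv ℝ h (x t)) (x' t) ≥ -α (h (x t)))
    (hinit : 0 ≤ h (x 0)) :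
    ∀ t ∈ Set.Ico (0 : ℝ) T, 0 ≤ h (x t) :=
  cbf_forward_invariance_general T h hh α hαmono hα0 x x' hx hineq hinit
end

section
/- (Corollary to Liénard's Theorem.) Under the hypotheses of Liénard's Theorem (F, g : ℝ → ℝ continuously differentiable and odd, x·g(x) > 0 for x ≠ 0, F(0) = 0, F′(0) < 0, F having its single positive zero at x = a, F strictly increasing to ∞ on [a,∞)), the orbit Φ of any nonconstant periodic solution of ẋ = y − F(x), ẏ = −g(x) is symmetric about the origin — i.e., (x, y) ∈ Φ implies (−x, −y) ∈ Φ — and Φ contains a point (x₂, y₂) with x₂ > a. -/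
open Filter

/-- `(x, y)` is a solution of the Liénard system `ẋ = y − F(x)`, `ẏ = −g(x)`. -/
def IsLienardSolution (F g : ℝ → ℝ) (x y : ℝ → ℝ) : Prop :=
  ∀ t, HasDerivAt x (y t - F (x t)) t ∧ HasDerivAt y (-(g (x t))) t

/-- `(x, y)` is a nonconstant periodic solution of the Liénard system. -/
def IsNonconstPeriodicLienardSolution (F g : ℝ → ℝ) (x y : ℝ → ℝ) : Prop :=
  IsLienardSolution F g x y ∧
    (∃ T > (0 : ℝ), ∀ t, x (t + T) = x t ∧ y (t + T) = y t) ∧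
    (∃ t s, (x t, y t) ≠ (x s, y s))

/-- The orbit of a solution curve. -/
def lienardOrbit (x y : ℝ → ℝ) : Set (ℝ × ℝ) :=
  Set.range fun t => (x t, y t)

/-!
After a reflection, let `(0, y₀)` with `y₀ > 0` be the crossing of the `y`-axis by the orbit
farthest from the origin. Up to the next and from the previous crossing, `y` is monotone, so the
two half-arcs are graphs over `y`, and the intermediate value theorem applied to the half-arc in
`x ≥ 0` and the reflection of the one in `x ≤ 0` gives a point of the orbit whose reflection is
also on the orbit. As `F` and `g` are odd, `(-x, -y)` solves the same system, so by uniqueness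
the reflected orbit is the orbit itself.

If the orbit stayed in `|x| ≤ a`, the energy `y² / 2 + ∫₀ˣ g` would be nondecreasing along it
(its derivative is `-g(x) F(x) ≥ 0`), hence constant by periodicity, so `g(x) F(x) = 0` along
the orbit; but `x` takes values in `(0, a)`, where `g F < 0`.
-/

open Set Topology Function

theorem Function.Periodic.eq_of_monotone {α β : Type*} [AddCommGroup α] [LinearOrder α]
    [IsOrderedAddMonoid α] [Archimedean α] [PartialOrder β] {f : α → β} {c : α}
    (hf : Periodic f c) (hc : 0 < c) (hmono : Monotone f) (s t : α) : f s = f t := by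
  wlog hst : s ≤ t generalizing s t
  · exact (this t s (le_of_not_ge hst)).symm
  obtain ⟨n, hn⟩ := Archimedean.arch (t - s) hc
  refine le_antisymm (hmono hst) ?_
  calc f t ≤ f (s + n • c) := hmono (sub_le_iff_le_add'.mp hn)
    _ = f s := hf.nsmul n s

theorem HasDerivAt.eventually_nhdsGT_lt {f : ℝ → ℝ} {f' a : ℝ} (hf : HasDerivAt f f' a)
    (hf' : 0 < f') : ∀ᶠ t in 𝓝[>] a, f a < f t := by
  filter_upwards [nhdsGT_le_nhdsNE a ((hasDerivAt_iff_tendsto_slope.mp hf).eventually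
    (eventually_gt_nhds hf')), self_mem_nhdsWithin] with t hslope (ht : a < t)
  exact (slope_pos_iff ht).mp hslope

theorem HasDerivAt.eventually_nhdsLT_lt {f : ℝ → ℝ} {f' a : ℝ} (hf : HasDerivAt f f' a)
    (hf' : 0 < f') : ∀ᶠ t in 𝓝[<] a, f t < f a := by
  filter_upwards [nhdsLT_le_nhdsNE a ((hasDerivAt_iff_tendsto_slope.mp hf).eventually
    (eventually_gt_nhds hf')), self_mem_nhdsWithin] with t hslope (ht : t < a)
  exact (slope_pos_iff_gt ht).mp hslope

theorem neg_of_mem_Ioo_of_hasDerivAt_neg {f : ℝ → ℝ} {f' a b : ℝ} (hf : Continuous f)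
    (hfa : f a = 0) (hf' : HasDerivAt f f' a) (hneg : f' < 0)
    (hzero : ∀ w ∈ Ioo a b, f w ≠ 0) : ∀ w ∈ Ioo a b, f w < 0 := by
  intro w hw
  have hnear : ∀ᶠ t in 𝓝[>] a, f t < 0 := by
    simpa [hfa] using hf'.neg.eventually_nhdsGT_lt (neg_pos.mpr hneg)
  obtain ⟨v, hv, hvw⟩ := (hnear.and (Ioo_mem_nhdsGT hw.1)).exists
  by_contra! hw0
  obtain ⟨z, hz, hfz⟩ := intermediate_value_Icc hvw.2.le hf.continuousOn ⟨hv.le, hw0⟩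
  exact hzero z ⟨hvw.1.trans_le hz.1, hz.2.trans_lt hw.2⟩ hfz

theorem exists_first_zero {f : ℝ → ℝ} {a b : ℝ} (hf : Continuous f)
    (hpos : ∀ᶠ t in 𝓝[>] a, 0 < f t) (hab : a < b) (hb : f b ≤ 0) :
    ∃ c ∈ Ioc a b, f c = 0 ∧ ∀ t ∈ Ioo a c, 0 < f t := by
  obtain ⟨d, had, hd⟩ := (nhdsGT_basis a).eventually_iff.mp hpos
  obtain ⟨e, hae, he⟩ := exists_between (lt_min had hab)
  have hed : e < d := he.trans_le (min_le_left d b)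
  have heb : e < b := he.trans_le (min_le_right d b)
  have hfe : 0 < f e := hd ⟨hae, hed⟩
  have hS : IsCompact (Icc e b ∩ f ⁻¹' Iic 0) :=
    isCompact_Icc.inter_right (isClosed_Iic.preimage hf)
  obtain ⟨c, ⟨hc, hfc⟩, hmin⟩ := hS.exists_isLeast ⟨b, ⟨heb.le, le_rfl⟩, hb⟩
  have hbefore : ∀ t ∈ Ioo a c, 0 < f t := fun t ht => by
    rcases lt_or_ge t d with htd | htd
    · exact hd ⟨ht.1, htd⟩
    · by_contra! hft
      exact (hmin ⟨⟨hed.le.trans htd, ht.2.le.trans hc.2⟩, hft⟩).not_gt ht.2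
  refine ⟨c, ⟨hae.trans_le hc.1, hc.2⟩, le_antisymm hfc ?_, hbefore⟩
  by_contra! hfc'
  obtain ⟨z, hz, hfz⟩ := intermediate_value_Icc' hc.1 hf.continuousOn ⟨hfc'.le, hfe.le⟩
  have hcz : c ≤ z := hmin ⟨⟨hz.1, hz.2.trans hc.2⟩, hfz.le⟩
  rw [le_antisymm hz.2 hcz] at hfz
  exact hfc'.ne hfz

theorem IsCompact.continuousOn_invFunOn {X Y : Type*} [TopologicalSpace X] [TopologicalSpace Y]
    [T2Space Y] [Nonempty X] {f : X → Y} {K : Set X} (hK : IsCompact K)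
    (hf : ContinuousOn f K) (hinj : InjOn f K) : ContinuousOn (invFunOn f K) (f '' K) := by
  rw [continuousOn_iff_isClosed]
  intro C hC
  refine ⟨f '' (K ∩ C),
    ((hK.inter_right hC).image_of_continuousOn (hf.mono inter_subset_left)).isClosed, ?_⟩
  ext z
  constructor
  · rintro ⟨hzC, k, hk, rfl⟩
    rw [mem_preimage, hinj.leftInvOn_invFunOn hk] at hzC
    exact ⟨⟨k, ⟨hk, hzC⟩, rfl⟩, k, hk, rfl⟩
  · rintro ⟨⟨c, ⟨hcK, hcC⟩, hc⟩, k, hk, rfl⟩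
    refine ⟨?_, k, hk, rfl⟩
    rwa [mem_preimage, hinj.leftInvOn_invFunOn hk, ← hinj hcK hk hc]

theorem exists_eq_neg_of_arcs {x y : ℝ → ℝ} (hx : Continuous x) (hy : Continuous y)
    {r t₀ t₁ : ℝ} (hr : r ≤ t₀) (ht₁ : t₀ ≤ t₁) (hxr : x r = 0) (hxt₁ : x t₁ = 0)
    (hxneg : ∀ t ∈ Icc r t₀, x t ≤ 0) (hxpos : ∀ t ∈ Icc t₀ t₁, 0 ≤ x t)
    (hinjl : InjOn y (Icc r t₀)) (hinjr : InjOn y (Icc t₀ t₁))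
    (h₁ : -y t₀ ≤ y t₁) (h₂ : -y r ≤ y t₀) (h₃ : y t₁ ≤ -y r) :
    ∃ s σ, x s = -x σ ∧ y s = -y σ := by
  set τ := invFunOn y (Icc t₀ t₁)
  set τ' := invFunOn y (Icc r t₀)
  have hright : MapsTo id (Icc (y t₁) (-y r)) (y '' Icc t₀ t₁) := fun c hc =>
    intermediate_value_Icc' ht₁ hy.continuousOn ⟨hc.1, hc.2.trans (by linarith)⟩
  have hleft : MapsTo Neg.neg (Icc (y t₁) (-y r)) (y '' Icc r t₀) := fun c hc =>
    intermediate_value_Icc hr hy.continuousOn ⟨by linarith [hc.2], by linarith [hc.1]⟩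
  -- over `y = c`, the arc on `[t₀, t₁]` is the graph of `x (τ c)` and the reflection of the arc
  -- on `[r, t₀]` that of `-x (τ' (-c))`; they meet where this sum vanishes
  have hD : ContinuousOn (fun c => x (τ c) + x (τ' (-c))) (Icc (y t₁) (-y r)) :=
    (hx.comp_continuousOn ((isCompact_Icc.continuousOn_invFunOn hy.continuousOn hinjr).mono
      hright)).add (hx.comp_continuousOn ((isCompact_Icc.continuousOn_invFunOn hy.continuousOn
        hinjl).comp continuous_neg.continuousOn hleft))
  have hDl : x (τ (y t₁)) + x (τ' (-y t₁)) ≤ 0 := by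
    rw [show τ (y t₁) = t₁ from hinjr.leftInvOn_invFunOn ⟨ht₁, le_rfl⟩, hxt₁, zero_add]
    exact hxneg _ (invFunOn_mem (hleft ⟨le_rfl, h₃⟩))
  have hDr : 0 ≤ x (τ (-y r)) + x (τ' (- -y r)) := by
    rw [neg_neg, show τ' (y r) = r from hinjl.leftInvOn_invFunOn ⟨le_rfl, hr⟩, hxr, add_zero]
    exact hxpos _ (invFunOn_mem (hright ⟨h₃, le_rfl⟩))
  obtain ⟨c, hc, hDc⟩ := intermediate_value_Icc h₃ hD ⟨hDl, hDr⟩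
  refine ⟨τ c, τ' (-c), by linarith [hDc], ?_⟩
  rw [show y (τ c) = c from invFunOn_eq (hright hc),
    show y (τ' (-c)) = -c from invFunOn_eq (hleft hc), neg_neg]

theorem eq_of_hasDerivAt_of_locallyLipschitz {E : Type*} [NormedAddCommGroup E]
    [NormedSpace ℝ E] {v : E → E} (hv : LocallyLipschitz v) {f g : ℝ → E}
    (hf : ∀ t, HasDerivAt f (v (f t)) t) (hg : ∀ t, HasDerivAt g (v (g t)) t) {t₀ : ℝ}
    (heq : f t₀ = g t₀) : f = g := by
  funext t
  obtain ⟨A, B, ht, ht₀⟩ : ∃ A B, t ∈ Ioo A B ∧ t₀ ∈ Ioo A B :=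
    ⟨min t t₀ - 1, max t t₀ + 1, by grind, by grind⟩
  have hK : IsCompact (f '' Icc A B ∪ g '' Icc A B) :=
    (isCompact_Icc.image (continuous_iff_continuousAt.mpr fun t => (hf t).continuousAt)).union
      (isCompact_Icc.image (continuous_iff_continuousAt.mpr fun t => (hg t).continuousAt))
  obtain ⟨L, hL⟩ := hv.locallyLipschitzOn.exists_lipschitzOnWith_of_compact hK
  exact ODE_solution_unique_of_mem_Ioo (v := fun _ => v) (fun _ _ => hL) ht₀
    (fun s hs => ⟨hf s, .inl ⟨s, Ioo_subset_Icc_self hs, rfl⟩⟩)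
    (fun s hs => ⟨hg s, .inr ⟨s, Ioo_subset_Icc_self hs, rfl⟩⟩) heq ht

def lienardField (F g : ℝ → ℝ) (p : ℝ × ℝ) : ℝ × ℝ :=
  (p.2 - F p.1, -g p.1)

noncomputable def lienardEnergy (g : ℝ → ℝ) (u v : ℝ) : ℝ :=
  v ^ 2 / 2 + ∫ w in (0 : ℝ)..u, g w

theorem locallyLipschitz_lienardField {F g : ℝ → ℝ} (hF : LocallyLipschitz F)
    (hg : LocallyLipschitz g) : LocallyLipschitz (lienardField F g) :=
  (LipschitzWith.prod_snd.locallyLipschitz.sub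
    (hF.comp LipschitzWith.prod_fst.locallyLipschitz)).prodMk
      (hg.comp LipschitzWith.prod_fst.locallyLipschitz).neg

namespace IsLienardSolution

variable {F g x y : ℝ → ℝ}

theorem continuous_x (h : IsLienardSolution F g x y) : Continuous x :=
  continuous_iff_continuousAt.mpr fun t => (h t).1.continuousAt

theorem continuous_y (h : IsLienardSolution F g x y) : Continuous y :=
  continuous_iff_continuousAt.mpr fun t => (h t).2.continuousAt

theorem hasDerivAt_lienardField (h : IsLienardSolution F g x y) (t : ℝ) :
    HasDerivAt (fun t => (x t, y t)) (lienardField F g (x t, y t)) t :=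
  (h t).1.prodMk (h t).2

theorem comp_add_const (h : IsLienardSolution F g x y) (c : ℝ) :
    IsLienardSolution F g (fun t => x (t + c)) (fun t => y (t + c)) := fun t =>
  ⟨(h (t + c)).1.comp_add_const t c, (h (t + c)).2.comp_add_const t c⟩

theorem neg (hF : Function.Odd F) (hg : Function.Odd g) (h : IsLienardSolution F g x y) :
    IsLienardSolution F g (fun t => -x t) (fun t => -y t) := fun t =>
  ⟨(h t).1.neg.congr_deriv (by rw [hF (x t)]; ring), (h t).2.neg.congr_deriv (by rw [hg (x t)])⟩

theorem neg_comp_neg (h : IsLienardSolution F g x y) :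
    IsLienardSolution (fun u => F (-u)) (fun u => -g (-u)) (fun t => -x (-t)) (fun t => y (-t)) :=
  fun t => ⟨((h (-t)).1.comp t (hasDerivAt_neg t)).neg.congr_deriv (by simp),
    ((h (-t)).2.comp t (hasDerivAt_neg t)).congr_deriv (by simp)⟩

theorem eq_of_eq (hF : LocallyLipschitz F) (hg : LocallyLipschitz g)
    (h : IsLienardSolution F g x y) {u v : ℝ → ℝ} (h' : IsLienardSolution F g u v) {t₀ : ℝ}
    (hx : x t₀ = u t₀) (hy : y t₀ = v t₀) : x = u ∧ y = v := by
  have := eq_of_hasDerivAt_of_locallyLipschitz (locallyLipschitz_lienardField hF hg)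
    h.hasDerivAt_lienardField h'.hasDerivAt_lienardField (Prod.ext hx hy)
  exact ⟨funext fun t => congrArg Prod.fst (congrFun this t),
    funext fun t => congrArg Prod.snd (congrFun this t)⟩

theorem y_ne_zero (hF : LocallyLipschitz F) (hg : LocallyLipschitz g) (hF0 : F 0 = 0)
    (hg0 : g 0 = 0) (h : IsLienardSolution F g x y) (hnc : ∃ t s, (x t, y t) ≠ (x s, y s))
    {t : ℝ} (hx : x t = 0) : y t ≠ 0 := by
  intro hy
  have hzero : IsLienardSolution F g (fun _ => 0) (fun _ => 0) := fun t =>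
    ⟨by simpa [hF0] using hasDerivAt_const t (0 : ℝ),
      by simpa [hg0] using hasDerivAt_const t (0 : ℝ)⟩
  obtain ⟨rfl, rfl⟩ := h.eq_of_eq hF hg hzero hx hy
  obtain ⟨t, s, hts⟩ := hnc
  exact hts rfl

theorem exists_neg (h : IsLienardSolution F g x y) (hF0 : F 0 = 0) (hg0 : g 0 = 0)
    (hgpos : ∀ w, 0 < w → 0 < g w) {T : ℝ} (hper : Periodic y T) (hT : 0 < T)
    (hne : ∀ t, x t = 0 → y t ≠ 0) : ∃ t, x t < 0 := by
  by_contra! hx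
  have hgx : ∀ t, 0 ≤ g (x t) := fun t => (hx t).eq_or_lt.elim
    (fun h0 => by rw [← h0, hg0]) fun hpos => (hgpos _ hpos).le
  have hanti : Antitone y :=
    antitone_of_hasDerivAt_nonpos (fun t => (h t).2) fun t => neg_nonpos.mpr (hgx t)
  have hconst : ∀ s t, y s = y t := (hper.comp OrderDual.toDual).eq_of_monotone hT hanti.dual_right
  have hgx0 : ∀ t, g (x t) = 0 := fun t => by
    have := (h t).2.unique
      ((hasDerivAt_const t (y t)).congr_of_eventuallyEq (.of_forall fun s => hconst s t))
    linarith
  have hx0 : ∀ t, x t = 0 := fun t => (hx t).eq_or_lt.elim Eq.symm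
    fun hpos => absurd (hgx0 t) (hgpos _ hpos).ne'
  have hy0 := (h 0).1.unique
    ((hasDerivAt_const 0 (0 : ℝ)).congr_of_eventuallyEq (.of_forall fun s => hx0 s))
  rw [hx0, hF0, sub_zero] at hy0
  exact hne 0 (hx0 0) hy0

theorem exists_next_crossing (h : IsLienardSolution F g x y) (hF0 : F 0 = 0)
    (hgpos : ∀ w, 0 < w → 0 < g w) (hne : ∀ t, x t = 0 → y t ≠ 0) {t₀ b : ℝ}
    (hx₀ : x t₀ = 0) (hy₀ : 0 < y t₀) (hb : t₀ < b) (hxb : x b ≤ 0) :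
    ∃ t₁ ∈ Ioc t₀ b, x t₁ = 0 ∧ y t₁ < 0 ∧ (∀ t ∈ Icc t₀ t₁, 0 ≤ x t) ∧
      StrictAntiOn y (Icc t₀ t₁) := by
  have hstart : ∀ᶠ t in 𝓝[>] t₀, 0 < x t := by
    simpa [hx₀] using (h t₀).1.eventually_nhdsGT_lt (by rwa [hx₀, hF0, sub_zero])
  obtain ⟨t₁, ht₁, hxt₁, hpos⟩ := exists_first_zero h.continuous_x hstart hb hxb
  have hanti : StrictAntiOn y (Icc t₀ t₁) := by
    refine strictAntiOn_of_deriv_neg (convex_Icc _ _) h.continuous_y.continuousOn fun t ht => ?_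
    rw [interior_Icc] at ht
    rw [(h t).2.deriv, neg_neg_iff_pos]
    exact hgpos _ (hpos t ht)
  -- if `y t₁ > 0`, then `x` would be increasing through its zero at `t₁`
  have hyt₁ : y t₁ < 0 := by
    refine lt_of_le_of_ne (not_lt.mp fun hy₁ => ?_) (hne t₁ hxt₁)
    obtain ⟨t, hxt, ht⟩ := (((h t₁).1.eventually_nhdsLT_lt
      (by rwa [hxt₁, hF0, sub_zero])).and (Ioo_mem_nhdsLT ht₁.1)).exists
    rw [hxt₁] at hxt
    exact (hpos t ht).not_gt hxt
  refine ⟨t₁, ht₁, hxt₁, hyt₁, fun t ht => ?_, hanti⟩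
  rcases ht.1.eq_or_lt with rfl | h₀
  · exact hx₀.ge
  rcases ht.2.eq_or_lt with rfl | h₁
  · exact hxt₁.ge
  exact (hpos t ⟨h₀, h₁⟩).le

theorem exists_prev_crossing (h : IsLienardSolution F g x y) (hF0 : F 0 = 0)
    (hgneg : ∀ w, w < 0 → g w < 0) (hne : ∀ t, x t = 0 → y t ≠ 0) {a t₀ : ℝ}
    (hx₀ : x t₀ = 0) (hy₀ : 0 < y t₀) (ha : a < t₀) (hxa : 0 ≤ x a) :
    ∃ r ∈ Ico a t₀, x r = 0 ∧ y r < 0 ∧ (∀ t ∈ Icc r t₀, x t ≤ 0) ∧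
      StrictMonoOn y (Icc r t₀) := by
  obtain ⟨t₁, ht₁, hxt₁, hyt₁, hpos, hanti⟩ := h.neg_comp_neg.exists_next_crossing
    (t₀ := -t₀) (b := -a) (by simpa) (fun w hw => by simpa using hgneg (-w) (by linarith))
    (fun t ht => hne (-t) (by simpa using ht)) (by simpa) (by simpa) (by linarith)
    (by simpa using hxa)
  refine ⟨-t₁, ⟨by linarith [ht₁.2], by linarith [ht₁.1]⟩, by simpa using hxt₁, hyt₁,
    fun t ht => ?_, fun s hs t ht hst => ?_⟩
  · simpa using hpos (-t) ⟨by linarith [ht.2], by linarith [ht.1]⟩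
  · simpa using hanti ⟨by linarith [ht.2], by linarith [ht.1]⟩
      ⟨by linarith [hs.2], by linarith [hs.1]⟩ (neg_lt_neg hst)

/-- Maximality of `y t₀` makes the arc between the neighbouring crossings of the `y`-axis long
enough to meet its own reflection. -/
theorem exists_eq_neg_of_max_crossing (h : IsLienardSolution F g x y) (hF0 : F 0 = 0)
    (hgpos : ∀ w, 0 < w → 0 < g w) (hgneg : ∀ w, w < 0 → g w < 0)
    (hne : ∀ t, x t = 0 → y t ≠ 0) {T : ℝ} (hper : Periodic x T) (hT : 0 < T) {t₀ : ℝ}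
    (hx₀ : x t₀ = 0) (hy₀ : 0 < y t₀) (hmax : ∀ t, x t = 0 → |y t| ≤ y t₀) :
    ∃ s σ, x s = -x σ ∧ y s = -y σ := by
  obtain ⟨t₁, ht₁, hxt₁, hyt₁, hpos, hanti⟩ := h.exists_next_crossing hF0 hgpos hne hx₀ hy₀
    (lt_add_of_pos_right t₀ hT) (by rw [hper, hx₀])
  obtain ⟨r, hr, hxr, hyr, hneg, hmono⟩ := h.exists_prev_crossing hF0 hgneg hne hx₀ hy₀
    (sub_lt_self t₀ hT) (by rw [hper.sub_eq, hx₀])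
  exact exists_eq_neg_of_arcs h.continuous_x h.continuous_y hr.2.le ht₁.1.le hxr hxt₁ hneg hpos
    hmono.injOn hanti.injOn (abs_le.mp (hmax t₁ hxt₁)).1 (by linarith [abs_le.mp (hmax r hxr)])
    (by linarith)

/-- The crossing of the `y`-axis farthest from the origin exists because the orbit is compact. -/
theorem exists_eq_neg (hFodd : Function.Odd F) (hgodd : Function.Odd g)
    (h : IsLienardSolution F g x y) (hF0 : F 0 = 0) (hg0 : g 0 = 0)
    (hgpos : ∀ w, 0 < w → 0 < g w) (hgneg : ∀ w, w < 0 → g w < 0)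
    (hne : ∀ t, x t = 0 → y t ≠ 0) {T : ℝ} (hper : Periodic (fun t => (x t, y t)) T)
    (hT : 0 < T) : ∃ s σ, x s = -x σ ∧ y s = -y σ := by
  have hperx : Periodic x T := fun t => congrArg Prod.fst (hper t)
  have hpery : Periodic y T := fun t => congrArg Prod.snd (hper t)
  have hne' : ∀ t, -x t = 0 → -y t ≠ 0 := fun t ht => by simpa using hne t (by simpa using ht)
  obtain ⟨tneg, htneg⟩ := h.exists_neg hF0 hg0 hgpos hpery hT hne
  obtain ⟨tpos, htpos⟩ := (h.neg hFodd hgodd).exists_neg hF0 hg0 hgpos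
    (fun t => by simp [hpery t]) hT hne'
  obtain ⟨z, hz⟩ : 0 ∈ range x :=
    intermediate_value_univ tneg tpos h.continuous_x ⟨htneg.le, by linarith⟩
  have hZ : IsCompact (lienardOrbit x y ∩ {p | p.1 = 0}) :=
    (hper.compact_of_continuous hT.ne' (h.continuous_x.prodMk h.continuous_y)).inter_right
      (isClosed_eq continuous_fst continuous_const)
  obtain ⟨_, ⟨⟨t₀, rfl⟩, hx₀⟩, hmax⟩ := hZ.exists_isMaxOn ⟨(x z, y z), ⟨z, rfl⟩, hz⟩
    (continuous_abs.comp continuous_snd).continuousOn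
  have hmax' : ∀ t, x t = 0 → |y t| ≤ |y t₀| := fun t ht => hmax ⟨⟨t, rfl⟩, ht⟩
  rcases (hne t₀ hx₀).lt_or_gt with hy₀ | hy₀
  · obtain ⟨s, σ, hs, hσ⟩ := (h.neg hFodd hgodd).exists_eq_neg_of_max_crossing hF0 hgpos hgneg
      hne' (fun t => by simp [hperx t]) hT (t₀ := t₀) (by simpa) (by simpa)
      (fun t ht => by simpa [abs_of_neg hy₀] using hmax' t (by simpa using ht))
    exact ⟨s, σ, by linarith, by linarith⟩
  · exact h.exists_eq_neg_of_max_crossing hF0 hgpos hgneg hne hperx hT hx₀ hy₀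
      fun t ht => abs_of_pos hy₀ ▸ hmax' t ht

/-- By uniqueness, a point of the orbit whose reflection is also on the orbit makes the reflected
curve a time shift of the original one. -/
theorem neg_mem_lienardOrbit (hF : LocallyLipschitz F) (hg : LocallyLipschitz g)
    (hFodd : Function.Odd F) (hgodd : Function.Odd g) (h : IsLienardSolution F g x y)
    {s σ : ℝ} (hx : x s = -x σ) (hy : y s = -y σ) :
    ∀ q ∈ lienardOrbit x y, (-q.1, -q.2) ∈ lienardOrbit x y := by
  obtain ⟨hxc, hyc⟩ := h.eq_of_eq hF hg ((h.neg hFodd hgodd).comp_add_const (σ - s)) (t₀ := s)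
    (by simp [hx]) (by simp [hy])
  rintro _ ⟨t, rfl⟩
  exact ⟨t + (σ - s), by simp [congrFun hxc t, congrFun hyc t]⟩

theorem hasDerivAt_lienardEnergy (hg : Continuous g) (h : IsLienardSolution F g x y) (t : ℝ) :
    HasDerivAt (fun t => lienardEnergy g (x t) (y t)) (-(g (x t) * F (x t))) t :=
  ((((h t).2.pow 2).div_const 2).add
    (((hg.integral_hasStrictDerivAt 0 (x t)).hasDerivAt).comp t (h t).1)).congr_deriv (by ring)

theorem mul_eq_zero_of_forall_mul_nonpos (hg : Continuous g) (h : IsLienardSolution F g x y)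
    {T : ℝ} (hper : Periodic (fun t => (x t, y t)) T) (hT : 0 < T)
    (hgF : ∀ t, g (x t) * F (x t) ≤ 0) (t : ℝ) : g (x t) * F (x t) = 0 := by
  have hmono : Monotone fun t => lienardEnergy g (x t) (y t) :=
    monotone_of_hasDerivAt_nonneg (h.hasDerivAt_lienardEnergy hg) fun t => neg_nonneg.mpr (hgF t)
  have hconst := (hper.comp fun p => lienardEnergy g p.1 p.2).eq_of_monotone hT hmono
  have := (h.hasDerivAt_lienardEnergy hg t).unique
    ((hasDerivAt_const t _).congr_of_eventuallyEq (.of_forall fun s => hconst s t))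
  linarith

theorem exists_lt_x (hg : Continuous g) (h : IsLienardSolution F g x y) {T : ℝ}
    (hper : Periodic (fun t => (x t, y t)) T) (hT : 0 < T) {a : ℝ}
    (hgF : ∀ w, |w| ≤ a → g w * F w ≤ 0) (hgF' : ∀ w ∈ Ioo 0 a, g w * F w ≠ 0)
    (hsymm : ∀ q ∈ lienardOrbit x y, (-q.1, -q.2) ∈ lienardOrbit x y) {tneg : ℝ}
    (htneg : x tneg < 0) : ∃ t, a < x t := by
  have hsymm' : ∀ t, ∃ s, x s = -x t := fun t => by
    obtain ⟨s, hs⟩ := hsymm _ ⟨t, rfl⟩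
    exact ⟨s, congrArg Prod.fst hs⟩
  obtain ⟨tpos, htpos⟩ := hsymm' tneg
  by_contra! hle
  have hgF0 := h.mul_eq_zero_of_forall_mul_nonpos hg hper hT fun t => hgF _ <| abs_le.mpr
    ⟨by obtain ⟨s, hs⟩ := hsymm' t; linarith [hle s], hle t⟩
  have hpos : 0 < x tpos := by linarith
  have ha : 0 < a := hpos.trans_le (hle tpos)
  obtain ⟨w, hw0, hw⟩ := exists_between (lt_min ha hpos)
  obtain ⟨t, ht⟩ := intermediate_value_univ tneg tpos h.continuous_x
    ⟨htneg.le.trans hw0.le, (hw.trans_le (min_le_right a _)).le⟩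
  exact hgF' (x t) (ht ▸ ⟨hw0, hw.trans_le (min_le_left a _)⟩) (hgF0 t)

end IsLienardSolution

theorem mul_nonpos_of_abs_le {F g : ℝ → ℝ} {a : ℝ} (hFodd : Function.Odd F)
    (hgodd : Function.Odd g) (hF : ∀ w ∈ Icc 0 a, F w ≤ 0) (hg : ∀ w, 0 ≤ w → 0 ≤ g w) {w : ℝ}
    (hw : |w| ≤ a) : g w * F w ≤ 0 := by
  have key : ∀ w, 0 ≤ w → w ≤ a → g w * F w ≤ 0 := fun w h₀ ha =>
    mul_nonpos_of_nonneg_of_nonpos (hg w h₀) (hF w ⟨h₀, ha⟩)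
  rcases le_total 0 w with h₀ | h₀
  · exact key w h₀ ((le_abs_self w).trans hw)
  · have := key (-w) (neg_nonneg.mpr h₀) ((neg_le_abs w).trans hw)
    rwa [hFodd w, hgodd w, neg_mul_neg] at this

theorem lienard_orbit_symmetric_and_exceeds_general
    (F g : ℝ → ℝ) (hF : ContDiff ℝ 1 F) (hg : ContDiff ℝ 1 g)
    (hFodd : ∀ x, F (-x) = -F x) (hgodd : ∀ x, g (-x) = -g x)
    (hgpos : ∀ x ≠ (0 : ℝ), 0 < x * g x)
    (hF0 : F 0 = 0) (hF'0 : deriv F 0 < 0)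
    (a : ℝ) (ha : 0 < a)
    (hFzero : ∀ x > (0 : ℝ), (F x = 0 ↔ x = a)) :
    ∀ x y, IsNonconstPeriodicLienardSolution F g x y →
      (∀ q ∈ lienardOrbit x y, (-q.1, -q.2) ∈ lienardOrbit x y) ∧
      (∃ q ∈ lienardOrbit x y, q.1 > a) := by
  rintro x y ⟨h, ⟨T, hT, hper⟩, hnc⟩
  have hper' : Periodic (fun t => (x t, y t)) T := fun t => Prod.ext (hper t).1 (hper t).2
  have hg0 : g 0 = 0 := Function.Odd.map_zero hgodd
  have hgpos' : ∀ w, 0 < w → 0 < g w := fun w hw => pos_of_mul_pos_right (hgpos w hw.ne') hw.le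
  have hgneg : ∀ w, w < 0 → g w < 0 := fun w hw => neg_of_mul_pos_right (hgpos w hw.ne) hw.le
  have hne : ∀ t, x t = 0 → y t ≠ 0 := fun t =>
    h.y_ne_zero hF.locallyLipschitz hg.locallyLipschitz hF0 hg0 hnc
  obtain ⟨s, σ, hs, hσ⟩ := h.exists_eq_neg hFodd hgodd hF0 hg0 hgpos' hgneg hne hper' hT
  have hsymm := h.neg_mem_lienardOrbit hF.locallyLipschitz hg.locallyLipschitz hFodd hgodd hs hσ
  refine ⟨hsymm, ?_⟩
  have hFneg : ∀ w ∈ Ioo 0 a, F w < 0 := neg_of_mem_Ioo_of_hasDerivAt_neg hF.continuous hF0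
    (hF.differentiable one_ne_zero 0).hasDerivAt hF'0 fun w hw => by
      rw [ne_eq, hFzero w hw.1]; exact hw.2.ne
  have hFnonpos : ∀ w ∈ Icc 0 a, F w ≤ 0 := fun w hw => by
    rcases hw.1.eq_or_lt with rfl | h₀; · exact hF0.le
    rcases hw.2.eq_or_lt with rfl | h₁; · exact ((hFzero w h₀).mpr rfl).le
    exact (hFneg w ⟨h₀, h₁⟩).le
  have hgnonneg : ∀ w, 0 ≤ w → 0 ≤ g w := fun w hw =>
    hw.eq_or_lt.elim (fun h₀ => h₀ ▸ hg0.ge) fun h₀ => (hgpos' w h₀).le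
  obtain ⟨tneg, htneg⟩ := h.exists_neg hF0 hg0 hgpos' (fun t => (hper t).2) hT hne
  obtain ⟨t, ht⟩ := h.exists_lt_x hg.continuous hper' hT
    (fun w hw => mul_nonpos_of_abs_le hFodd hgodd hFnonpos hgnonneg hw)
    (fun w hw => (mul_neg_of_pos_of_neg (hgpos' w hw.1) (hFneg w hw)).ne) hsymm htneg
  exact ⟨(x t, y t), ⟨t, rfl⟩, ht⟩

/-- Corollary to Liénard's Theorem: under the Liénard hypotheses, the orbit `Φ`
of any nonconstant periodic solution is symmetric about the origin and contains
a point `(x₂, y₂)` with `x₂ > a`. -/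
theorem lienard_orbit_symmetric_and_exceeds
    (F g : ℝ → ℝ) (hF : ContDiff ℝ 1 F) (hg : ContDiff ℝ 1 g)
    (hFodd : ∀ x, F (-x) = -F x) (hgodd : ∀ x, g (-x) = -g x)
    (hgpos : ∀ x ≠ (0 : ℝ), 0 < x * g x)
    (hF0 : F 0 = 0) (hF'0 : deriv F 0 < 0)
    (a : ℝ) (ha : 0 < a)
    (hFzero : ∀ x > (0 : ℝ), (F x = 0 ↔ x = a))
    (hFmono : StrictMonoOn F (Set.Ici a))
    (hFtop : Tendsto F atTop atTop) :
    ∀ x y, IsNonconstPeriodicLienardSolution F g x y →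
      (∀ q ∈ lienardOrbit x y, (-q.1, -q.2) ∈ lienardOrbit x y) ∧
      (∃ q ∈ lienardOrbit x y, q.1 > a) :=
  lienard_orbit_symmetric_and_exceeds_general F g hF hg hFodd hgodd hgpos hF0 hF'0 a ha hFzero
end

section
/- (Failure of the relaxed aCBF condition to ensure safety.) Let α : ℝ → ℝ be continuously differentiable, strictly monotonically increasing, with α(0) = 0, α(r) → ∞ as r → ∞ and α(r) → −∞ as r → −∞, and let γ > 0. Consider the planar system ẋ = θ̃ + (1/2) x α(1 − x²), θ̃̇ = −2γ x, and set h(x, θ̃) = 1 − x² − θ̃²/(2γ). Then for every global solution (x(t), θ̃(t)) defined on [0, ∞) with initial condition satisfying h(x(0), θ̃(0)) ≥ 0 and (x(0), θ̃(0)) ≠ (0, 0), there exists t ≥ 0 such that x(t)² > 1; i.e., every such trajectory leaves the state safe set S = {x ∈ ℝ : x² ≤ 1}. -/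
/-!
Suppose a solution other than the origin stays in `x² ≤ 1` forever. Then `θ̃` stays bounded
(were `θ̃` large, `ẋ > 2` for a unit of time), and the energy `V = γ x² + θ̃² / 2` is
nondecreasing because `V̇ = γ x² α(1 - x²) ≥ 0`, so `V ≥ V(0) > 0`. The bounded function
`Z = x θ̃ - μ θ̃ arctan (k x³) + c V` then satisfies `Ż ≥ ρ > 0`, which is absurd. Near `x = 0`,
where `arctan (k x³)` is flat, `Ż ≈ θ̃² ≥ V(0)`; near `x² = 1`, where it is saturated, the term
`2 γ μ x arctan (k x³)` beats `-2 γ x²`; in between, `c γ x² α(1 - x²)` is bounded below and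
`c` is large.
-/

open Filter Real Set Topology

theorem Convex.mul_sub_le_image_sub_of_le_hasDerivAt {D : Set ℝ} (hD : Convex ℝ D)
    {f f' : ℝ → ℝ} (hf : ∀ t ∈ D, HasDerivAt f (f' t) t) {C : ℝ} (hC : ∀ t ∈ D, C ≤ f' t)
    {a b : ℝ} (ha : a ∈ D) (hb : b ∈ D) (hab : a ≤ b) : C * (b - a) ≤ f b - f a :=
  hD.mul_sub_le_image_sub_of_le_deriv
    (fun t ht => (hf t ht).continuousAt.continuousWithinAt)
    (fun t ht => (hf t (interior_subset ht)).differentiableAt.differentiableWithinAt)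
    (fun t ht => (hf t (interior_subset ht)).deriv ▸ hC t (interior_subset ht)) a ha b hb hab

theorem tendsto_atTop_of_hasDerivAt_ge {f f' : ℝ → ℝ} {ρ : ℝ} (hρ : 0 < ρ)
    (hf : ∀ t, 0 ≤ t → HasDerivAt f (f' t) t) (hρf : ∀ t, 0 ≤ t → ρ ≤ f' t) :
    Tendsto f atTop atTop := by
  have hgrowth : ∀ t, 0 ≤ t → f 0 + ρ * t ≤ f t := fun t ht => by
    have := (convex_Ici (0 : ℝ)).mul_sub_le_image_sub_of_le_hasDerivAt hf hρf
      self_mem_Ici ht ht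
    linarith
  exact tendsto_atTop_mono' atTop (eventually_atTop.2 ⟨0, hgrowth⟩)
    (tendsto_atTop_add_const_left _ _ (tendsto_id.const_mul_atTop hρ))

theorem abs_mul_le_mul_of_abs_le {a b A B : ℝ} (ha : |a| ≤ A) (hb : |b| ≤ B) :
    |a * b| ≤ A * B :=
  abs_mul a b ▸ mul_le_mul ha hb (abs_nonneg b) ((abs_nonneg a).trans ha)

theorem mul_arctan_nonneg {a b : ℝ} (h : 0 ≤ a * b) : 0 ≤ a * arctan b := by
  rcases mul_nonneg_iff.1 h with ⟨ha, hb⟩ | ⟨ha, hb⟩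
  · exact mul_nonneg ha (arctan_nonneg.2 hb)
  · exact mul_nonneg_of_nonpos_of_nonpos ha (arctan_le_zero.2 hb)

theorem pi_div_four_le_abs_arctan {b : ℝ} (h : 1 ≤ |b|) : π / 4 ≤ |arctan b| := by
  rcases le_total 0 b with hb | hb
  · rw [abs_of_nonneg hb] at h
    rw [abs_of_nonneg (arctan_nonneg.2 hb), ← arctan_one]
    exact arctan_strictMono.monotone h
  · rw [abs_of_nonpos hb] at h
    rw [abs_of_nonpos (arctan_le_zero.2 hb), ← arctan_neg, ← arctan_one]
    exact arctan_strictMono.monotone h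

section ArctanCube

variable {k X : ℝ}

theorem mul_arctan_mul_pow_three_nonneg (hk : 0 ≤ k) : 0 ≤ X * arctan (k * X ^ 3) :=
  mul_arctan_nonneg (by nlinarith [pow_two_nonneg (X ^ 2)])

theorem quarter_le_mul_arctan_mul_pow_three (hk : 8 ≤ k) (hX : 1 / 4 ≤ X ^ 2) :
    1 / 4 ≤ X * arctan (k * X ^ 3) := by
  have hX' : 1 / 2 ≤ |X| := by nlinarith [sq_abs X, abs_nonneg X]
  have hcube : 1 ≤ |k * X ^ 3| := by
    rw [abs_mul, abs_pow, abs_of_nonneg (by linarith : (0 : ℝ) ≤ k)]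
    nlinarith [pow_le_pow_left₀ (by norm_num) hX' 3]
  have hnonneg := mul_arctan_mul_pow_three_nonneg (X := X) (by linarith : (0 : ℝ) ≤ k)
  calc 1 / 4 ≤ 1 / 2 * (π / 4) := by nlinarith [pi_gt_three]
    _ ≤ |X| * |arctan (k * X ^ 3)| :=
        mul_le_mul hX' (pi_div_four_le_abs_arctan hcube) (by positivity) (abs_nonneg X)
    _ = X * arctan (k * X ^ 3) := by rw [← abs_mul, abs_of_nonneg hnonneg]

theorem deriv_arctan_mul_pow_three_le (hk : 0 ≤ k) :
    k * (3 * X ^ 2) / (1 + (k * X ^ 3) ^ 2) ≤ 3 * k * X ^ 2 := by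
  calc _ ≤ k * (3 * X ^ 2) := div_le_self (by positivity) (by nlinarith [sq_nonneg (k * X ^ 3)])
    _ = 3 * k * X ^ 2 := by ring

theorem deriv_arctan_mul_pow_three_le_of_quarter_le_sq (hk : 0 < k) (hX : 1 / 4 ≤ X ^ 2) :
    k * (3 * X ^ 2) / (1 + (k * X ^ 3) ^ 2) ≤ 48 / k := by
  rw [div_le_div_iff₀ (by positivity) hk]
  have hX4 : 1 ≤ 16 * (X ^ 2) ^ 2 := by nlinarith
  nlinarith [mul_le_mul_of_nonneg_left hX4 (by positivity : 0 ≤ 3 * k ^ 2 * X ^ 2)]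

end ArctanCube

theorem Monotone.map_one_sub_sq_mem_Icc {α : ℝ → ℝ} (hα : Monotone α) (hα0 : α 0 = 0)
    {X : ℝ} (hX : |X| ≤ 1) : α (1 - X ^ 2) ∈ Icc 0 (α 1) := by
  have hX2 : X ^ 2 ≤ 1 := (sq_le_one_iff_abs_le_one X).2 hX
  exact ⟨hα0 ▸ hα (by linarith), hα (by linarith [sq_nonneg X])⟩

noncomputable def energy (γ X Θ : ℝ) : ℝ := γ * X ^ 2 + Θ ^ 2 / 2

theorem energy_pos {γ X Θ : ℝ} (hγ : 0 < γ) (h : (X, Θ) ≠ (0, 0)) : 0 < energy γ X Θ := by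
  unfold energy
  rcases eq_or_ne X 0 with rfl | hX
  · have hΘ : Θ ≠ 0 := fun hΘ => h (by rw [hΘ])
    positivity
  · positivity

noncomputable def chetaev (γ μ k c X Θ : ℝ) : ℝ :=
  X * Θ - μ * (Θ * arctan (k * X ^ 3)) + c * energy γ X Θ

noncomputable def chetaevRate (γ μ k c X Θ A : ℝ) : ℝ :=
  Θ ^ 2 + 1 / 2 * (X * Θ * A) - 2 * γ * X ^ 2
    + μ * (2 * γ * (X * arctan (k * X ^ 3))
      - Θ * (k * (3 * X ^ 2) / (1 + (k * X ^ 3) ^ 2)) * (Θ + 1 / 2 * X * A))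
    + c * (γ * (X ^ 2 * A))

theorem chetaev_le {γ μ k c R X Θ : ℝ} (hγ : 0 ≤ γ) (hμ : 0 ≤ μ) (hc : 0 ≤ c)
    (hX : |X| ≤ 1) (hΘ : |Θ| ≤ R) :
    chetaev γ μ k c X Θ ≤ R + μ * (R * (π / 2)) + c * (γ + R ^ 2 / 2) := by
  have h1 : X * Θ ≤ R :=
    (le_abs_self _).trans ((abs_mul_le_mul_of_abs_le hX hΘ).trans_eq (one_mul R))
  have h2 : -(Θ * arctan (k * X ^ 3)) ≤ R * (π / 2) := by
    have harctan : |arctan (k * X ^ 3)| ≤ π / 2 :=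
      abs_le.2 ⟨(neg_pi_div_two_lt_arctan _).le, (arctan_lt_pi_div_two _).le⟩
    exact (neg_le_abs _).trans (abs_mul_le_mul_of_abs_le hΘ harctan)
  have h3 : energy γ X Θ ≤ γ + R ^ 2 / 2 := by
    have hX2 : X ^ 2 ≤ 1 := (sq_le_one_iff_abs_le_one X).2 hX
    have hΘ2 : Θ ^ 2 ≤ R ^ 2 := sq_le_sq' (abs_le.1 hΘ).1 (abs_le.1 hΘ).2
    unfold energy
    linarith [mul_le_mul_of_nonneg_left hX2 hγ]
  unfold chetaev
  linarith [mul_le_mul_of_nonneg_left h2 hμ, mul_le_mul_of_nonneg_left h3 hc]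

structure IsClosedLoopSolution (α : ℝ → ℝ) (γ : ℝ) (x θ : ℝ → ℝ) : Prop where
  hasDerivAt_x : ∀ t, 0 ≤ t → HasDerivAt x (θ t + 1 / 2 * x t * α (1 - x t ^ 2)) t
  hasDerivAt_θ : ∀ t, 0 ≤ t → HasDerivAt θ (-(2 * γ * x t)) t

namespace IsClosedLoopSolution

variable {α : ℝ → ℝ} {γ : ℝ} {x θ : ℝ → ℝ}

theorem neg (hs : IsClosedLoopSolution α γ x θ) : IsClosedLoopSolution α γ (-x) (-θ) where
  hasDerivAt_x t ht :=
    (hs.hasDerivAt_x t ht).neg.congr_deriv (by simp only [Pi.neg_apply, neg_sq]; ring)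
  hasDerivAt_θ t ht :=
    (hs.hasDerivAt_θ t ht).neg.congr_deriv (by simp only [Pi.neg_apply]; ring)

theorem hasDerivAt_energy (hs : IsClosedLoopSolution α γ x θ) {t : ℝ} (ht : 0 ≤ t) :
    HasDerivAt (fun t => energy γ (x t) (θ t)) (γ * (x t ^ 2 * α (1 - x t ^ 2))) t :=
  (((hs.hasDerivAt_x t ht).pow 2).const_mul γ |>.add
    (((hs.hasDerivAt_θ t ht).pow 2).div_const 2)).congr_deriv (by push_cast; ring)

theorem hasDerivAt_chetaev (hs : IsClosedLoopSolution α γ x θ) (μ k c : ℝ) {t : ℝ}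
    (ht : 0 ≤ t) :
    HasDerivAt (fun t => chetaev γ μ k c (x t) (θ t))
      (chetaevRate γ μ k c (x t) (θ t) (α (1 - x t ^ 2))) t := by
  have hx := hs.hasDerivAt_x t ht
  have hθ := hs.hasDerivAt_θ t ht
  exact ((hx.mul hθ).sub ((hθ.mul ((hx.pow 3).const_mul k).arctan).const_mul μ)).add
    ((hs.hasDerivAt_energy ht).const_mul c) |>.congr_deriv
      (by simp only [chetaevRate, Pi.pow_apply]; push_cast; ring)

theorem energy_le (hs : IsClosedLoopSolution α γ x θ) (hmono : Monotone α) (hα0 : α 0 = 0)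
    (hγ : 0 ≤ γ) (hsafe : ∀ t, 0 ≤ t → |x t| ≤ 1) {t : ℝ} (ht : 0 ≤ t) :
    energy γ (x 0) (θ 0) ≤ energy γ (x t) (θ t) := by
  have := (convex_Ici (0 : ℝ)).mul_sub_le_image_sub_of_le_hasDerivAt
    (fun s hs' => hs.hasDerivAt_energy hs') (C := 0)
    (fun s hs' => mul_nonneg hγ (mul_nonneg (sq_nonneg _)
      (hmono.map_one_sub_sq_mem_Icc hα0 (hsafe s hs')).1)) self_mem_Ici ht ht
  linarith

theorem theta_le (hs : IsClosedLoopSolution α γ x θ) (hmono : Monotone α) (hα0 : α 0 = 0)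
    (hγ : 0 ≤ γ) (hsafe : ∀ t, 0 ≤ t → |x t| ≤ 1) {t₀ : ℝ} (ht₀ : 0 ≤ t₀) :
    θ t₀ ≤ 2 * γ + α 1 / 2 + 2 := by
  by_contra! hbig
  have hD : Icc t₀ (t₀ + 1) ⊆ Ici 0 := fun s hs' => ht₀.trans hs'.1
  have hθ : ∀ s ∈ Icc t₀ (t₀ + 1), θ t₀ - 2 * γ ≤ θ s := fun s hs' => by
    have := (convex_Icc t₀ (t₀ + 1)).mul_sub_le_image_sub_of_le_hasDerivAt
      (fun u hu => hs.hasDerivAt_θ u (hD hu)) (C := -(2 * γ))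
      (fun u hu => by nlinarith [(abs_le.1 (hsafe u (hD hu))).2])
      (left_mem_Icc.2 (by linarith)) hs' hs'.1
    nlinarith [hs'.2]
  have hx := (convex_Icc t₀ (t₀ + 1)).mul_sub_le_image_sub_of_le_hasDerivAt
    (fun u hu => hs.hasDerivAt_x u (hD hu)) (C := θ t₀ - 2 * γ - α 1 / 2)
    (fun u hu => by
      have hA := hmono.map_one_sub_sq_mem_Icc hα0 (hsafe u (hD hu))
      have hxA : |x u * α (1 - x u ^ 2)| ≤ 1 * α 1 :=
        abs_mul_le_mul_of_abs_le (hsafe u (hD hu)) ((abs_of_nonneg hA.1).trans_le hA.2)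
      linarith [(abs_le.1 hxA).1, hθ u hu])
    (left_mem_Icc.2 (by linarith)) (right_mem_Icc.2 (by linarith)) (by linarith)
  linarith [(abs_le.1 (hsafe t₀ ht₀)).1, (abs_le.1 (hsafe (t₀ + 1) (by linarith))).2]

theorem abs_theta_le (hs : IsClosedLoopSolution α γ x θ) (hmono : Monotone α) (hα0 : α 0 = 0)
    (hγ : 0 ≤ γ) (hsafe : ∀ t, 0 ≤ t → |x t| ≤ 1) {t : ℝ} (ht : 0 ≤ t) :
    |θ t| ≤ 2 * γ + α 1 / 2 + 2 := by
  have hneg := hs.neg.theta_le hmono hα0 hγ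
    (fun s hs' => (abs_neg (x s)).trans_le (hsafe s hs')) ht
  exact abs_le.2 ⟨by simp only [Pi.neg_apply] at hneg; linarith, hs.theta_le hmono hα0 hγ hsafe ht⟩

end IsClosedLoopSolution

section ChetaevRate

variable {γ μ k c R M X Θ A : ℝ}

theorem abs_mul_deriv_arctan_mul_pow_three_mul_le {Y W : ℝ} (hk : 0 ≤ k) (hΘ : |Θ| ≤ R)
    (hY : |Y| ≤ M) (hW : k * (3 * X ^ 2) / (1 + (k * X ^ 3) ^ 2) ≤ W) :
    |Θ * (k * (3 * X ^ 2) / (1 + (k * X ^ 3) ^ 2)) * Y| ≤ R * W * M :=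
  abs_mul_le_mul_of_abs_le
    (abs_mul_le_mul_of_abs_le hΘ ((abs_of_nonneg (by positivity)).trans_le hW)) hY

theorem le_chetaevRate_of_abs_le {ε a₁ V₀ : ℝ} (hγ : 0 ≤ γ) (hμ : 0 ≤ μ) (hk : 0 ≤ k)
    (hc : 0 ≤ c) (hXε : |X| ≤ ε) (hΘ : |Θ| ≤ R) (hA : A ∈ Icc 0 a₁)
    (hM : |Θ + 1 / 2 * X * A| ≤ M) (hV : V₀ ≤ energy γ X Θ)
    (hε : 4 * γ * ε ^ 2 + ε * R * a₁ / 2 + 3 * μ * k * R * M * ε ^ 2 ≤ V₀) :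
    V₀ ≤ chetaevRate γ μ k c X Θ A := by
  have hX2 : X ^ 2 ≤ ε ^ 2 := sq_le_sq' (abs_le.1 hXε).1 (abs_le.1 hXε).2
  have hcross : |X * Θ * A| ≤ ε * R * a₁ := abs_mul_le_mul_of_abs_le
    (abs_mul_le_mul_of_abs_le hXε hΘ) ((abs_of_nonneg hA.1).trans_le hA.2)
  have hdrift := abs_mul_deriv_arctan_mul_pow_three_mul_le hk hΘ hM
    ((deriv_arctan_mul_pow_three_le hk).trans (by gcongr : 3 * k * X ^ 2 ≤ 3 * k * ε ^ 2))
  have hspin := mul_nonneg (mul_nonneg (by norm_num : (0 : ℝ) ≤ 2) hγ)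
    (mul_arctan_mul_pow_three_nonneg (X := X) hk)
  have hdamp : 0 ≤ c * (γ * (X ^ 2 * A)) := by have := hA.1; positivity
  unfold energy at hV
  unfold chetaevRate
  linarith [(abs_le.1 hcross).1, mul_le_mul_of_nonneg_left (abs_le.1 hdrift).2 hμ,
    mul_nonneg hμ hspin, mul_le_mul_of_nonneg_left hX2 hγ]

theorem one_le_chetaevRate_of_le_mul_sq_mul {a₁ : ℝ} (hγ : 0 ≤ γ) (hμ : 0 ≤ μ) (hk : 0 ≤ k)
    (hX : |X| ≤ 1) (hΘ : |Θ| ≤ R) (hA : A ∈ Icc 0 a₁) (hM : |Θ + 1 / 2 * X * A| ≤ M)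
    (hc : 1 + 2 * γ + R * a₁ / 2 + 3 * μ * k * R * M ≤ c * (γ * (X ^ 2 * A))) :
    1 ≤ chetaevRate γ μ k c X Θ A := by
  have hX2 : X ^ 2 ≤ 1 := (sq_le_one_iff_abs_le_one X).2 hX
  have hcross : |X * Θ * A| ≤ 1 * R * a₁ := abs_mul_le_mul_of_abs_le
    (abs_mul_le_mul_of_abs_le hX hΘ) ((abs_of_nonneg hA.1).trans_le hA.2)
  have hdrift := abs_mul_deriv_arctan_mul_pow_three_mul_le hk hΘ hM
    ((deriv_arctan_mul_pow_three_le hk).trans (by gcongr : 3 * k * X ^ 2 ≤ 3 * k * 1))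
  have hspin := mul_nonneg (mul_nonneg (by norm_num : (0 : ℝ) ≤ 2) hγ)
    (mul_arctan_mul_pow_three_nonneg (X := X) hk)
  unfold chetaevRate
  linarith [(abs_le.1 hcross).1, mul_le_mul_of_nonneg_left (abs_le.1 hdrift).2 hμ,
    mul_nonneg hμ hspin, mul_le_mul_of_nonneg_left hX2 hγ, sq_nonneg Θ]

theorem one_le_chetaevRate_of_quarter_le_sq (hγ : 0 < γ) (hμ : 2 * γ + 2 ≤ μ * γ / 2)
    (hk : 8 ≤ k) (hkμ : 96 * μ * R * M ≤ k) (hc : 0 ≤ c) (hX : |X| ≤ 1) (hX4 : 1 / 4 ≤ X ^ 2)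
    (hΘ : |Θ| ≤ R) (hA : 0 ≤ A) (hRA : R * A ≤ 1) (hM : |Θ + 1 / 2 * X * A| ≤ M) :
    1 ≤ chetaevRate γ μ k c X Θ A := by
  have hμ0 : 0 ≤ μ := by nlinarith
  have hX2 : X ^ 2 ≤ 1 := (sq_le_one_iff_abs_le_one X).2 hX
  have hcross : |X * Θ * A| ≤ 1 * R * A := abs_mul_le_mul_of_abs_le
    (abs_mul_le_mul_of_abs_le hX hΘ) (abs_of_nonneg hA).le
  have hdrift := abs_mul_deriv_arctan_mul_pow_three_mul_le (by linarith : (0 : ℝ) ≤ k) hΘ hM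
    (deriv_arctan_mul_pow_three_le_of_quarter_le_sq (by linarith : (0 : ℝ) < k) hX4)
  have hdrift' : μ * (R * (48 / k) * M) ≤ 1 / 2 := by
    rw [show μ * (R * (48 / k) * M) = 48 * μ * R * M / k by ring,
      div_le_iff₀ (by linarith)]
    linarith
  have hspin := quarter_le_mul_arctan_mul_pow_three hk hX4
  have hdamp : 0 ≤ c * (γ * (X ^ 2 * A)) := by positivity
  unfold chetaevRate
  linarith [(abs_le.1 hcross).1, mul_le_mul_of_nonneg_left (abs_le.1 hdrift).2 hμ0,
    mul_le_mul_of_nonneg_left hspin (by positivity : 0 ≤ μ * (2 * γ)),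
    mul_le_mul_of_nonneg_left hX2 hγ.le, sq_nonneg Θ]

end ChetaevRate

theorem exists_pos_le_chetaevRate {α : ℝ → ℝ} (hα : Continuous α) (hmono : StrictMono α)
    (hα0 : α 0 = 0) {γ R V₀ : ℝ} (hγ : 0 < γ) (hR : 0 ≤ R) (hV₀ : 0 < V₀) :
    ∃ μ k c ρ : ℝ, 0 ≤ μ ∧ 0 ≤ c ∧ 0 < ρ ∧ ∀ X Θ, |X| ≤ 1 → |Θ| ≤ R →
      V₀ ≤ energy γ X Θ → ρ ≤ chetaevRate γ μ k c X Θ (α (1 - X ^ 2)) := by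
  -- `μ` and `k` are dictated by the region `1 - ε ≤ X ^ 2`, then `ε` by `|X| ≤ ε`, and
  -- `c` by the band in between.
  set M := R + α 1 / 2
  set μ := 4 + 4 / γ
  set k := 8 + 96 * μ * R * M
  have ha₁ : 0 ≤ α 1 := hα0 ▸ hmono.monotone zero_le_one
  have hμ : 2 * γ + 2 ≤ μ * γ / 2 := by
    rw [show μ * γ / 2 = 2 * γ + 2 by simp only [μ]; field_simp; ring]
  have hM : ∀ X Θ, |X| ≤ 1 → |Θ| ≤ R → |Θ + 1 / 2 * X * α (1 - X ^ 2)| ≤ M := fun X Θ hX hΘ => by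
    have hA := hmono.monotone.map_one_sub_sq_mem_Icc hα0 hX
    have hXA : |X * α (1 - X ^ 2)| ≤ 1 * α 1 :=
      abs_mul_le_mul_of_abs_le hX ((abs_of_nonneg hA.1).trans_le hA.2)
    calc _ ≤ |Θ| + |1 / 2 * X * α (1 - X ^ 2)| := abs_add_le _ _
      _ = |Θ| + 1 / 2 * |X * α (1 - X ^ 2)| := by rw [mul_assoc, abs_mul _ (_ * _),
            abs_of_pos (by norm_num : (0 : ℝ) < 1 / 2)]
      _ ≤ R + α 1 / 2 := by linarith
  obtain ⟨ε, hε0, hε, hεsmall, hαε⟩ : ∃ ε > 0, ε ≤ 1 / 2 ∧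
      4 * γ * ε ^ 2 + ε * R * α 1 / 2 + 3 * μ * k * R * M * ε ^ 2 ≤ V₀ ∧ R * α ε ≤ 1 := by
    have hpoly : Tendsto (fun ε => 4 * γ * ε ^ 2 + ε * R * α 1 / 2 + 3 * μ * k * R * M * ε ^ 2)
        (𝓝 0) (𝓝 0) := (by fun_prop : Continuous _).tendsto' _ _ (by simp)
    have hRα : Tendsto (fun ε => R * α ε) (𝓝 0) (𝓝 0) :=
      (by fun_prop : Continuous _).tendsto' _ _ (by simp [hα0])
    have hsmall := ((eventually_le_nhds one_half_pos).and
      ((hpoly.eventually_le_const hV₀).and (hRα.eventually_le_const one_pos)))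
    exact ((eventually_mem_nhdsWithin (s := Ioi 0) (a := 0)).and
      (hsmall.filter_mono nhdsWithin_le_nhds)).exists
  have hαε0 : 0 < α ε := hα0 ▸ hmono hε0
  set c := (1 + 2 * γ + R * α 1 / 2 + 3 * μ * k * R * M) / (γ * (ε ^ 2 * α ε))
  have hc : c * (γ * (ε ^ 2 * α ε)) = 1 + 2 * γ + R * α 1 / 2 + 3 * μ * k * R * M :=
    div_mul_cancel₀ _ (by positivity)
  refine ⟨μ, k, c, min V₀ 1, by positivity, by positivity, by positivity,
    fun X Θ hX hΘ hV => ?_⟩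
  have hA := hmono.monotone.map_one_sub_sq_mem_Icc hα0 hX
  rcases le_or_gt |X| ε with hXε | hXε
  · exact (min_le_left _ _).trans (le_chetaevRate_of_abs_le hγ.le (by positivity)
      (by positivity) (by positivity) hXε hΘ hA (hM X Θ hX hΘ) hV hεsmall)
  refine (min_le_right _ _).trans ?_
  rcases lt_or_ge (X ^ 2) (1 - ε) with hX1 | hX1
  · refine one_le_chetaevRate_of_le_mul_sq_mul hγ.le (by positivity) (by positivity) hX hΘ hA
      (hM X Θ hX hΘ) (hc ▸ ?_)
    have hεX : ε ^ 2 ≤ X ^ 2 := by rw [← sq_abs X]; gcongr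
    have hαX : α ε ≤ α (1 - X ^ 2) := hmono.monotone (by linarith)
    gcongr
  · refine one_le_chetaevRate_of_quarter_le_sq hγ hμ (le_add_of_nonneg_right (by positivity))
      (le_add_of_nonneg_left (by norm_num))
      (by positivity) hX (by linarith) hΘ hA.1 ?_ (hM X Θ hX hΘ)
    exact (mul_le_mul_of_nonneg_left (hmono.monotone (by linarith)) hR).trans hαε

theorem relaxed_acbf_condition_unsafe_general
    (α : ℝ → ℝ) (hα : ContDiff ℝ 1 α) (hαmono : StrictMono α)
    (hα0 : α 0 = 0)
    (γ : ℝ) (hγ : 0 < γ)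
    (x θt : ℝ → ℝ)
    (hx : ∀ t, 0 ≤ t →
      HasDerivAt x (θt t + (1 / 2) * x t * α (1 - (x t) ^ 2)) t)
    (hθt : ∀ t, 0 ≤ t → HasDerivAt θt (-(2 * γ * x t)) t)
    (hne : (x 0, θt 0) ≠ (0, 0)) :
    ∃ t, 0 ≤ t ∧ (x t) ^ 2 > 1 := by
  by_contra! hsafe
  replace hsafe : ∀ t, 0 ≤ t → |x t| ≤ 1 := fun t ht => (sq_le_one_iff_abs_le_one _).1 (hsafe t ht)
  have hs : IsClosedLoopSolution α γ x θt := ⟨hx, hθt⟩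
  set R := 2 * γ + α 1 / 2 + 2
  have hθR : ∀ t, 0 ≤ t → |θt t| ≤ R := fun t ht =>
    hs.abs_theta_le hαmono.monotone hα0 hγ.le hsafe ht
  obtain ⟨μ, k, c, ρ, hμ, hc, hρ, hrate⟩ := exists_pos_le_chetaevRate hα.continuous hαmono hα0 hγ
    ((abs_nonneg _).trans (hθR 0 le_rfl)) (energy_pos hγ hne)
  have hZ : Tendsto (fun t => chetaev γ μ k c (x t) (θt t)) atTop atTop :=
    tendsto_atTop_of_hasDerivAt_ge hρ (fun t ht => hs.hasDerivAt_chetaev μ k c ht)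
      fun t ht => hrate _ _ (hsafe t ht) (hθR t ht)
        (hs.energy_le hαmono.monotone hα0 hγ.le hsafe ht)
  obtain ⟨t, hbig, ht⟩ := ((hZ.eventually_gt_atTop
    (R + μ * (R * (π / 2)) + c * (γ + R ^ 2 / 2))).and (eventually_ge_atTop 0)).exists
  exact hbig.not_ge (chetaev_le hγ.le hμ hc (hsafe t ht) (hθR t ht))

/-- Failure of the relaxed aCBF condition to ensure safety (Section V): for
the closed-loop planar system `ẋ = θ̃ + (1/2) x α(1−x²)`, `θ̃̇ = −2γx` with `α`
a continuously differentiable extended class-K∞ function and `γ > 0`, every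
global solution starting in the 0-superlevel set of the composite barrier
`h(x,θ̃) = 1 − x² − θ̃²/(2γ)` other than the origin eventually leaves the state
safe set `{x : x² ≤ 1}`. -/
theorem relaxed_acbf_condition_unsafe
    (α : ℝ → ℝ) (hα : ContDiff ℝ 1 α) (hαmono : StrictMono α)
    (hα0 : α 0 = 0)
    (hαtop : Tendsto α atTop atTop) (hαbot : Tendsto α atBot atBot)
    (γ : ℝ) (hγ : 0 < γ)
    (x θt : ℝ → ℝ)
    (hx : ∀ t, 0 ≤ t →
      HasDerivAt x (θt t + (1 / 2) * x t * α (1 - (x t) ^ 2)) t)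
    (hθt : ∀ t, 0 ≤ t → HasDerivAt θt (-(2 * γ * x t)) t)
    (hinit : 0 ≤ 1 - (x 0) ^ 2 - (θt 0) ^ 2 / (2 * γ))
    (hne : (x 0, θt 0) ≠ (0, 0)) :
    ∃ t, 0 ≤ t ∧ (x t) ^ 2 > 1 :=
  relaxed_acbf_condition_unsafe_general α hα hαmono hα0 γ hγ x θt hx hθt hne
end
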